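/- arXiv:1903.09274 — 2 statements merged into one kernel-verified Lean document; each statement's English description precedes it below -/
import Mathlib

section
/- Let H be a Hadamard matrix of order n ≥ 4 that is regular, i.e., all row sums and all column sums of H are equal to a common value s. Then n = 4h^2 for some positive integer h, and s = 2h or s = -2h. -/
/-- a regular Hadamard matrix of order `n ≥ 4` with common row/column
sum `s` has order `n = 4 h ^ 2` and `s = ± 2 h`. -/
theorem regular_hadamard_order (n : ℕ) (hn : 4 ≤ n) (H : Matrix (Fin n) (Fin n) ℝ)
    (hentries : ∀ i j, H i j = 1 ∨ H i j = -1)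
    (hHad : H * H.transpose = (n : ℝ) • 1)
    (s : ℝ)
    (hrow : ∀ i, ∑ j, H i j = s)
    (hcol : ∀ j, ∑ i, H i j = s) :
    ∃ h : ℕ, 0 < h ∧ n = 4 * h ^ 2 ∧ (s = 2 * h ∨ s = -(2 * h)) := by
  classical
  -- integer version of the matrix
  set E : Matrix (Fin n) (Fin n) ℤ := fun i j => if H i j = 1 then 1 else -1 with hE
  have hcast : ∀ i j, ((E i j : ℤ) : ℝ) = H i j := by
    intro i j
    rcases hentries i j with h | h <;> norm_num [hE, h]
  have hpm : ∀ i j, E i j = 1 ∨ E i j = -1 := by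
    intro i j
    rcases hentries i j with h | h <;> norm_num [hE, h]
  have hn0 : (0 : ℝ) < n := by positivity
  -- s ^ 2 = n
  have h1 : ∑ i, ∑ k, (H * H.transpose) i k = (n : ℝ) * n := by
    rw [hHad]
    simp [Matrix.one_apply, Finset.sum_ite_eq, Finset.mul_sum, mul_comm]
  have h2 : ∑ i, ∑ k, (H * H.transpose) i k = (n : ℝ) * s ^ 2 := by
    simp only [Matrix.mul_apply, Matrix.transpose_apply]
    have : ∀ i : Fin n, ∑ k, ∑ j, H i j * H k j = s ^ 2 := by
      intro i
      rw [Finset.sum_comm]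
      have e1 : ∀ j : Fin n, ∑ k, H i j * H k j = H i j * s := by
        intro j
        rw [← Finset.mul_sum, hcol]
      simp only [e1]
      rw [← Finset.sum_mul, hrow, sq]
    simp only [this]
    simp [mul_comm]
  have hsq : s ^ 2 = n := by
    have := h1.symm.trans h2
    have hne : (n : ℝ) ≠ 0 := ne_of_gt hn0
    field_simp at this
    nlinarith [hn0]
  -- two distinct rows
  have h0n : (0 : ℕ) < n := by omega
  have h1n : (1 : ℕ) < n := by omega
  set i0 : Fin n := ⟨0, h0n⟩
  set i1 : Fin n := ⟨1, h1n⟩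
  have hne01 : i0 ≠ i1 := by simp [i0, i1, Fin.ext_iff]
  -- orthogonality: the ±1 sum over n terms is 0, so n is even
  have orth : ∑ j, H i0 j * H i1 j = 0 := by
    have := congrFun (congrFun hHad i0) i1
    simp only [Matrix.mul_apply, Matrix.transpose_apply, Matrix.smul_apply,
      Matrix.one_apply, if_neg hne01, smul_zero] at this
    exact this
  have orthZ : ∑ j, E i0 j * E i1 j = 0 := by
    have : ((∑ j, E i0 j * E i1 j : ℤ) : ℝ) = 0 := by
      push_cast
      simp only [hcast]
      exact orth
    exact_mod_cast this
  have hneven : (2 : ℕ) ∣ n := by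
    have : ((∑ j, E i0 j * E i1 j : ℤ) : ZMod 2) = 0 := by rw [orthZ]; simp
    push_cast at this
    have e1 : ∀ j : Fin n, ((E i0 j : ZMod 2) * (E i1 j : ZMod 2)) = 1 := by
      intro j
      rcases hpm i0 j with h | h <;> rcases hpm i1 j with h' | h' <;>
        simp [h, h'] <;> decide
    rw [Finset.sum_congr rfl (fun j _ => e1 j)] at this
    simp at this
    have : ((n : ℕ) : ZMod 2) = 0 := by simpa using this
    exact (ZMod.natCast_eq_zero_iff n 2).mp this
  -- s is the integer m = row sum of E
  set m : ℤ := ∑ j, E i0 j with hm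
  have hsm : s = (m : ℝ) := by
    rw [← hrow i0, hm]
    push_cast
    simp only [hcast]
  have hmsq : m ^ 2 = (n : ℤ) := by
    have : ((m ^ 2 : ℤ) : ℝ) = ((n : ℤ) : ℝ) := by
      push_cast
      rw [← hsm]
      exact_mod_cast hsq
    exact_mod_cast this
  -- m is even
  have hmeven : (2 : ℤ) ∣ m := by
    have h2n : (2 : ℤ) ∣ (n : ℤ) := by exact_mod_cast hneven
    rw [← hmsq] at h2n
    have := Int.Prime.dvd_pow' (p := 2) (by norm_num) h2n
    exact this
  obtain ⟨k, hk⟩ := hmeven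
  refine ⟨k.natAbs, ?_, ?_, ?_⟩
  · rcases Nat.eq_zero_or_pos k.natAbs with h0 | h0
    · exfalso
      have : k = 0 := Int.natAbs_eq_zero.mp h0
      rw [this, mul_zero] at hk
      rw [hk] at hmsq
      simp at hmsq
      omega
    · exact h0
  · have habs : ((k.natAbs : ℤ)) * k.natAbs = k * k := Int.natAbs_mul_self' k
    have : (n : ℤ) = 4 * (k.natAbs : ℤ) ^ 2 := by
      rw [← hmsq, hk]
      nlinarith [habs]
    exact_mod_cast this
  · rcases Int.natAbs_eq k with h | h
    · left
      rw [hsm, hk, h]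
      norm_cast
    · right
      have hcastk : ((k.natAbs : ℝ)) = -(k : ℝ) := by
        have hk0 : k ≤ 0 := by omega
        rw [Nat.cast_natAbs]
        push_cast
        rw [abs_of_nonpos (by exact_mod_cast hk0 : (k:ℝ) ≤ 0)]
      rw [hsm, hk]
      push_cast
      rw [hcastk]
      ring
end

section
/- Let H = circ(h_1, ..., h_n) be a circulant Hadamard matrix of even order n ≥ 4, with λ_1 = h_1 + h_3 + ... + h_{n-1}, λ_2 = h_2 + h_4 + ... + h_n, H_1 = circ(h_1, h_3, ..., h_{n-1}), H_2 = circ(h_2, h_4, ..., h_n) with rows R_j, S_j. Set a = Σ_{j=2}^{n/2} ⟨R_1, R_j⟩ and b = Σ_{j=2}^{n/2} ⟨S_1, S_j⟩. Then a + b = λ_1^2 + λ_2^2 - n. -/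
lemma aux_erase_sum (m : ℕ) (hm : 0 < m) (f : Fin m → ℝ)
    (hf : ∀ i, f i = 1 ∨ f i = -1) :
    (∑ j ∈ Finset.univ.erase (⟨0, hm⟩ : Fin m), ∑ k : Fin m, f k * f (k - j))
      = (∑ i : Fin m, f i) ^ 2 - m := by
  haveI : NeZero m := ⟨hm.ne'⟩
  have h0 : (⟨0, hm⟩ : Fin m) = 0 := by ext; simp
  have hfull : (∑ j : Fin m, ∑ k : Fin m, f k * f (k - j)) = (∑ i : Fin m, f i) ^ 2 := by
    rw [Finset.sum_comm]
    have : ∀ k : Fin m, ∑ j : Fin m, f k * f (k - j) = f k * ∑ i : Fin m, f i := by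
      intro k
      rw [← Finset.mul_sum]
      congr 1
      exact Fintype.sum_equiv (Equiv.subLeft k) _ _ (fun j => rfl)
    simp_rw [this, ← Finset.sum_mul, sq]
  have hz : (∑ k : Fin m, f k * f (k - (0 : Fin m))) = m := by
    have h1 : ∀ k ∈ Finset.univ, f k * f (k - (0 : Fin m)) = 1 := by
      intro k _
      rw [sub_zero]
      rcases hf k with h | h <;> rw [h] <;> norm_num
    rw [Finset.sum_congr rfl h1]
    simp
  rw [h0, eq_sub_iff_add_eq, ← hz, ← hfull]
  exact Finset.sum_erase_add _ _ (Finset.mem_univ 0)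

/-- for a circulant Hadamard matrix of even order `n = 2m ≥ 4`,
with `a = Σ_{j=2}^{n/2} ⟨R₁,R_j⟩`, `b = Σ_{j=2}^{n/2} ⟨S₁,S_j⟩`, and
`λ₁, λ₂` the sums of the odd- and even-indexed first-row entries, one has
`a + b = λ₁² + λ₂² - n`. -/
theorem circulant_hadamard_a_add_b (n m : ℕ) (hm : 0 < m) (hnm : n = 2 * m)
    (hn : 4 ≤ n) (v : Fin n → ℝ)
    (hentries : ∀ i, v i = 1 ∨ v i = -1)
    (hHad : (Matrix.of fun i j : Fin n => v (j - i)) *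
        (Matrix.of fun i j : Fin n => v (j - i)).transpose = (n : ℝ) • 1) :
    (∑ j ∈ Finset.univ.erase (⟨0, hm⟩ : Fin m), ∑ k : Fin m,
        v ⟨2 * k.1, by have := k.2; omega⟩ *
          v ⟨2 * (k - j).1, by have := (k - j).2; omega⟩) +
    (∑ j ∈ Finset.univ.erase (⟨0, hm⟩ : Fin m), ∑ k : Fin m,
        v ⟨2 * k.1 + 1, by have := k.2; omega⟩ *
          v ⟨2 * (k - j).1 + 1, by have := (k - j).2; omega⟩) =
    (∑ i : Fin m, v ⟨2 * i.1, by have := i.2; omega⟩) ^ 2 +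
      (∑ i : Fin m, v ⟨2 * i.1 + 1, by have := i.2; omega⟩) ^ 2 - n := by
  set f : Fin m → ℝ := fun i => v ⟨2 * i.1, by have := i.2; omega⟩ with hf
  set g : Fin m → ℝ := fun i => v ⟨2 * i.1 + 1, by have := i.2; omega⟩ with hg
  have ha := aux_erase_sum m hm f (fun i => hentries _)
  have hb := aux_erase_sum m hm g (fun i => hentries _)
  calc (∑ j ∈ Finset.univ.erase (⟨0, hm⟩ : Fin m), ∑ k : Fin m, f k * f (k - j)) +
      (∑ j ∈ Finset.univ.erase (⟨0, hm⟩ : Fin m), ∑ k : Fin m, g k * g (k - j))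
      = ((∑ i : Fin m, f i) ^ 2 - m) + ((∑ i : Fin m, g i) ^ 2 - m) := by rw [ha, hb]
    _ = (∑ i : Fin m, f i) ^ 2 + (∑ i : Fin m, g i) ^ 2 - n := by
        rw [hnm]; push_cast; ring
end
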